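/- arXiv:2402.17609 — 3 statements merged into one kernel-verified Lean document; each statement's English description precedes it below -/
import Mathlib

section
/- For any N×N complex matrix B, ℓ > 0, and 2 ≤ p ≤ q ≤ ∞, one has |||B|||_{q,ℓ} ≤ C (1 + (Nℓ)^{(q-p)/(pq)}) |||B|||_{p,ℓ} for a universal constant C, with the convention (q-p)/(pq) = 1/p when q = ∞. -/
open Matrix MeasureTheory Asymptotics
open scoped ComplexOrder BigOperators

/-- Normalized trace `⟨M⟩ = N⁻¹ Tr M`. -/
noncomputable def ntr {N : ℕ} (M : Matrix (Fin N) (Fin N) ℂ) : ℂ :=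
  (N : ℂ)⁻¹ * M.trace

/-- `|A| = (A Aᴴ)^{1/2}`. -/
noncomputable def matAbs {N : ℕ} (A : Matrix (Fin N) (Fin N) ℂ) : Matrix (Fin N) (Fin N) ℂ :=
  (Matrix.posSemidef_self_mul_conjTranspose A).1.eigenvectorUnitary.1 *
    diagonal ((↑) ∘ (√·) ∘ (Matrix.posSemidef_self_mul_conjTranspose A).1.eigenvalues) *
    (star (Matrix.posSemidef_self_mul_conjTranspose A).1.eigenvectorUnitary : Matrix (Fin N) (Fin N) ℂ)

/-- Euclidean operator norm of a matrix. -/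
noncomputable def opNorm {N : ℕ} (A : Matrix (Fin N) (Fin N) ℂ) : ℝ :=
  ‖Matrix.toEuclideanCLM (𝕜 := ℂ) A‖

/-- Normalized `p`-th Schatten norm `⟨|A|^p⟩^{1/p}`. -/
noncomputable def schatten {N : ℕ} (p : ℕ) (A : Matrix (Fin N) (Fin N) ℂ) : ℝ :=
  (ntr (matAbs A ^ p)).re ^ ((p : ℝ)⁻¹)

/-- The `ℓ`-weighted `(2,p)`-Schatten norm, `p ∈ [2,∞]` (`p = ⊤` uses the operator norm). -/
noncomputable def wnorm {N : ℕ} (p : ℕ∞) (ℓ : ℝ) (A : Matrix (Fin N) (Fin N) ℂ) : ℝ :=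
  p.recTopCoe (schatten 2 A / ℓ ^ ((2:ℝ)⁻¹) + opNorm A)
    (fun q => schatten 2 A / ℓ ^ ((2:ℝ)⁻¹) + schatten q A / ℓ ^ ((q : ℝ)⁻¹))

/-- Resolvent `G(ζ) = (W - ζ)⁻¹`. -/
noncomputable def resOf {N : ℕ} (W : Matrix (Fin N) (Fin N) ℂ) (ζ : ℂ) :
    Matrix (Fin N) (Fin N) ℂ :=
  (W - ζ • (1 : Matrix (Fin N) (Fin N) ℂ))⁻¹

/-- `Im G = (G - Gᴴ)/(2i)`. -/
noncomputable def imPart {N : ℕ} (G : Matrix (Fin N) (Fin N) ℂ) : Matrix (Fin N) (Fin N) ℂ :=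
  (2 * Complex.I)⁻¹ • (G - Gᴴ)

/-- Bessel function of the first kind of order one (integral representation). -/
noncomputable def besselJ1 (x : ℝ) : ℝ :=
  (1 / Real.pi) * ∫ θ in (0:ℝ)..Real.pi, Real.cos (θ - x * Real.sin θ)

/-- Semicircle density on `[-2,2]`. -/
noncomputable def rhoSC (x : ℝ) : ℝ := (1 / (2 * Real.pi)) * Real.sqrt (4 - x ^ 2)

/-- Stieltjes transform of the semicircle law. -/
noncomputable def mSC (z : ℂ) : ℂ := ∫ x in (-2:ℝ)..2, (rhoSC x : ℂ) / (x - z)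

/-- `φ(t) = J₁(2t)/t`, with `φ(0) = 1`. -/
noncomputable def phiSC (t : ℝ) : ℝ := if t = 0 then 1 else besselJ1 (2 * t) / t

/-- The exponent `(q-p)/(pq)`, with the convention `1/p` for `q = ∞` (and `0` for `p = ∞`). -/
noncomputable def expo (p q : ℕ∞) : ℝ :=
  p.recTopCoe 0 (fun p' => q.recTopCoe ((p' : ℝ)⁻¹) (fun q' => ((q' : ℝ) - (p' : ℝ)) / ((p' : ℝ) * (q' : ℝ))))

/-! Let `s` be the singular values of `B` and `x = Nℓ`. The `k`-th Schatten term of the weighted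
norm is `‖s‖ₖ / x^{1/k}`, with `‖s‖ₖ` the unnormalised `ℓᵏ` norm, and the operator norm is
`‖s‖_∞ ≤ ‖s‖ₖ`. Since `‖s‖ₘ ≤ ‖s‖ₖ` for `k ≤ m`, the `q`-term is at most `x^{1/p - 1/q}` times the
`p`-term, while the `2`-term is common to both norms; so `C = 1` works. -/

theorem Real.rpow_sum_le_sum_rpow {ι : Type*} (s : Finset ι) {f : ι → ℝ}
    (hf : ∀ i ∈ s, 0 ≤ f i) {r : ℝ} (hr₀ : 0 < r) (hr₁ : r ≤ 1) :
    (∑ i ∈ s, f i) ^ r ≤ ∑ i ∈ s, f i ^ r := by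
  classical
  induction s using Finset.induction_on with
  | empty => simp [Real.zero_rpow hr₀.ne']
  | insert j s hj ih =>
    rw [Finset.forall_mem_insert] at hf
    rw [Finset.sum_insert hj, Finset.sum_insert hj]
    calc (f j + ∑ i ∈ s, f i) ^ r ≤ f j ^ r + (∑ i ∈ s, f i) ^ r :=
          Real.rpow_add_le_add_rpow hf.1 (Finset.sum_nonneg hf.2) hr₀.le hr₁
      _ ≤ f j ^ r + ∑ i ∈ s, f i ^ r := by gcongr; exact ih hf.2

section

variable {ι : Type*} [Fintype ι] {f : ι → ℝ}

theorem le_sum_pow_rpow_inv (hf : ∀ i, 0 ≤ f i) {k : ℕ} (hk : 0 < k) (i : ι) :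
    f i ≤ (∑ j, f j ^ k) ^ (k : ℝ)⁻¹ := by
  calc f i = (f i ^ k) ^ (k : ℝ)⁻¹ := (Real.pow_rpow_inv_natCast (hf i) hk.ne').symm
    _ ≤ (∑ j, f j ^ k) ^ (k : ℝ)⁻¹ :=
      Real.rpow_le_rpow (pow_nonneg (hf i) k)
        (Finset.single_le_sum (fun j _ => pow_nonneg (hf j) k) (Finset.mem_univ i))
        (by positivity)

theorem sum_pow_rpow_inv_le_of_le (hf : ∀ i, 0 ≤ f i) {k m : ℕ} (hk : 0 < k)
    (hkm : k ≤ m) :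
    (∑ i, f i ^ m) ^ (m : ℝ)⁻¹ ≤ (∑ i, f i ^ k) ^ (k : ℝ)⁻¹ := by
  have hm : (0 : ℝ) < m := by exact_mod_cast hk.trans_le hkm
  have hk' : (0 : ℝ) < k := by exact_mod_cast hk
  have hS : 0 ≤ ∑ i, f i ^ m := Finset.sum_nonneg fun i _ => pow_nonneg (hf i) m
  have hpow : ∀ i, (f i ^ m) ^ ((k : ℝ) / m) = f i ^ k := fun i => by
    rw [← Real.rpow_natCast, ← Real.rpow_mul (hf i), mul_div_cancel₀ _ hm.ne',
      Real.rpow_natCast]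
  have hsub : (∑ i, f i ^ m) ^ ((k : ℝ) / m) ≤ ∑ i, f i ^ k := by
    simpa only [hpow] using Real.rpow_sum_le_sum_rpow Finset.univ
      (fun i _ => pow_nonneg (hf i) m) (by positivity)
      ((div_le_one hm).2 (Nat.cast_le.2 hkm))
  calc (∑ i, f i ^ m) ^ (m : ℝ)⁻¹
      = ((∑ i, f i ^ m) ^ ((k : ℝ) / m)) ^ (k : ℝ)⁻¹ := by
        rw [← Real.rpow_mul hS]; congr 1; field_simp
    _ ≤ (∑ i, f i ^ k) ^ (k : ℝ)⁻¹ := by gcongr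

end

theorem Matrix.trace_conjStarAlgAut {n α : Type*} [Fintype n] [DecidableEq n] [CommRing α]
    [StarRing α] (U : unitary (Matrix n n α)) (M : Matrix n n α) :
    (Unitary.conjStarAlgAut α _ U M).trace = M.trace := by
  rw [Unitary.conjStarAlgAut_apply, trace_mul_cycle, Unitary.coe_star_mul_self, one_mul]

theorem CStarRing.norm_conjStarAlgAut {S E : Type*} [CommSemiring S] [Star S] [NormedRing E]
    [StarRing E] [CStarRing E] [Algebra S E] [StarModule S E] (U : unitary E) (x : E) :
    ‖Unitary.conjStarAlgAut S E U x‖ = ‖x‖ := by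
  rw [Unitary.conjStarAlgAut_apply, ← Unitary.coe_star, CStarRing.norm_mul_coe_unitary,
    CStarRing.norm_coe_unitary_mul]

section

variable {N : ℕ}

noncomputable def singularValues (A : Matrix (Fin N) (Fin N) ℂ) : Fin N → ℝ :=
  fun i => √((posSemidef_self_mul_conjTranspose A).1.eigenvalues i)

theorem singularValues_nonneg (A : Matrix (Fin N) (Fin N) ℂ) (i : Fin N) :
    0 ≤ singularValues A i :=
  Real.sqrt_nonneg _

theorem sum_singularValues_pow_nonneg (A : Matrix (Fin N) (Fin N) ℂ) (k : ℕ) :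
    0 ≤ ∑ i, singularValues A i ^ k :=
  Finset.sum_nonneg fun i _ => pow_nonneg (singularValues_nonneg A i) k

theorem matAbs_eq_conjStarAlgAut (A : Matrix (Fin N) (Fin N) ℂ) :
    matAbs A = Unitary.conjStarAlgAut ℂ _
      (posSemidef_self_mul_conjTranspose A).1.eigenvectorUnitary
      (diagonal ((↑) ∘ singularValues A)) :=
  rfl

theorem re_ntr_matAbs_pow (A : Matrix (Fin N) (Fin N) ℂ) (k : ℕ) :
    (ntr (matAbs A ^ k)).re = (N : ℝ)⁻¹ * ∑ i, singularValues A i ^ k := by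
  rw [ntr, matAbs_eq_conjStarAlgAut, ← map_pow, Matrix.trace_conjStarAlgAut, diagonal_pow,
    trace_diagonal]
  simp [← Complex.ofReal_pow, ← Complex.ofReal_natCast, ← Complex.ofReal_inv]

theorem schatten_eq (A : Matrix (Fin N) (Fin N) ℂ) (k : ℕ) :
    schatten k A = ((N : ℝ)⁻¹ * ∑ i, singularValues A i ^ k) ^ (k : ℝ)⁻¹ := by
  rw [schatten, re_ntr_matAbs_pow]

theorem schatten_nonneg (A : Matrix (Fin N) (Fin N) ℂ) (k : ℕ) : 0 ≤ schatten k A := by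
  rw [schatten_eq]
  exact Real.rpow_nonneg (mul_nonneg (by positivity) (sum_singularValues_pow_nonneg A k)) _

theorem schatten_div_rpow_eq (A : Matrix (Fin N) (Fin N) ℂ) (k : ℕ) {ℓ : ℝ}
    (hℓ : 0 ≤ ℓ) :
    schatten k A / ℓ ^ (k : ℝ)⁻¹ =
      (∑ i, singularValues A i ^ k) ^ (k : ℝ)⁻¹ / (N * ℓ) ^ (k : ℝ)⁻¹ := by
  have hS := sum_singularValues_pow_nonneg A k
  rw [schatten_eq, ← Real.div_rpow (mul_nonneg (by positivity) hS) hℓ,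
    ← Real.div_rpow hS (by positivity), inv_mul_eq_div, div_div]

open scoped Matrix.Norms.L2Operator in
theorem opNorm_le_of_forall_singularValues_le (A : Matrix (Fin N) (Fin N) ℂ) {t : ℝ}
    (ht : 0 ≤ t) (h : ∀ i, singularValues A i ≤ t) : opNorm A ≤ t := by
  have hP := posSemidef_self_mul_conjTranspose A
  have hsq : opNorm A * opNorm A = ‖A * Aᴴ‖ := by
    rw [opNorm, l2_opNorm_toEuclideanCLM]
    simpa only [conjTranspose_conjTranspose, l2_opNorm_conjTranspose] using
      (l2_opNorm_conjTranspose_mul_self Aᴴ).symm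
  have hAA : ‖A * Aᴴ‖ ≤ t * t := by
    rw [hP.1.spectral_theorem, CStarRing.norm_conjStarAlgAut, l2_opNorm_diagonal]
    refine pi_norm_le_iff_of_nonneg (by positivity) |>.2 fun i => ?_
    calc ‖(RCLike.ofReal (hP.1.eigenvalues i) : ℂ)‖
        = singularValues A i * singularValues A i := by
          rw [singularValues, Real.mul_self_sqrt (hP.eigenvalues_nonneg i), RCLike.norm_ofReal,
            abs_of_nonneg (hP.eigenvalues_nonneg i)]
      _ ≤ t * t := mul_self_le_mul_self (singularValues_nonneg A i) (h i)
  exact (mul_self_le_mul_self_iff (norm_nonneg _) ht).2 (hsq ▸ hAA)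

theorem opNorm_le_rpow_mul_schatten_div_rpow (A : Matrix (Fin N) (Fin N) ℂ) (hN : 0 < N)
    {ℓ : ℝ} (hℓ : 0 < ℓ) {k : ℕ} (hk : 0 < k) :
    opNorm A ≤ (N * ℓ) ^ (k : ℝ)⁻¹ * (schatten k A / ℓ ^ (k : ℝ)⁻¹) := by
  have hx : (N * ℓ : ℝ) ^ (k : ℝ)⁻¹ ≠ 0 := by positivity
  rw [schatten_div_rpow_eq A k hℓ.le, mul_div_cancel₀ _ hx]
  exact opNorm_le_of_forall_singularValues_le A
    (Real.rpow_nonneg (sum_singularValues_pow_nonneg A k) _)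
    (le_sum_pow_rpow_inv (singularValues_nonneg A) hk)

theorem schatten_div_rpow_le (A : Matrix (Fin N) (Fin N) ℂ) (hN : 0 < N) {ℓ : ℝ}
    (hℓ : 0 < ℓ) {k m : ℕ} (hk : 0 < k) (hkm : k ≤ m) :
    schatten m A / ℓ ^ (m : ℝ)⁻¹ ≤
      (N * ℓ) ^ ((k : ℝ)⁻¹ - (m : ℝ)⁻¹) * (schatten k A / ℓ ^ (k : ℝ)⁻¹) := by
  have hx : (0 : ℝ) < N * ℓ := by positivity
  rw [schatten_div_rpow_eq A m hℓ.le, schatten_div_rpow_eq A k hℓ.le]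
  calc _ ≤ (∑ i, singularValues A i ^ k) ^ (k : ℝ)⁻¹ / (N * ℓ) ^ (m : ℝ)⁻¹ := by
        gcongr
        exact sum_pow_rpow_inv_le_of_le (singularValues_nonneg A) hk hkm
    _ = _ := by
        rw [Real.rpow_sub hx]
        field_simp

theorem wnorm_top (ℓ : ℝ) (A : Matrix (Fin N) (Fin N) ℂ) :
    wnorm ⊤ ℓ A = schatten 2 A / ℓ ^ (2 : ℝ)⁻¹ + opNorm A :=
  rfl

theorem wnorm_natCast (k : ℕ) (ℓ : ℝ) (A : Matrix (Fin N) (Fin N) ℂ) :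
    wnorm k ℓ A = schatten 2 A / ℓ ^ (2 : ℝ)⁻¹ + schatten k A / ℓ ^ (k : ℝ)⁻¹ :=
  ENat.recTopCoe_natCast _ _ k

end

theorem expo_natCast_natCast {k m : ℕ} (hk : k ≠ 0) (hm : m ≠ 0) :
    expo k m = (k : ℝ)⁻¹ - (m : ℝ)⁻¹ := by
  simp only [expo, ENat.recTopCoe_natCast]
  field_simp

theorem add_le_one_add_mul_add {a b c e : ℝ} (ha : 0 ≤ a) (hb : 0 ≤ b) (he : 0 ≤ e)
    (h : c ≤ e * b) : a + c ≤ (1 + e) * (a + b) := by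
  nlinarith [mul_nonneg he ha]

/-- `|||B|||_{q,ℓ} ≤ C (1 + (Nℓ)^{(q-p)/(pq)}) |||B|||_{p,ℓ}`. -/
theorem wnorm_reverse_mono :
    ∃ C : ℝ, 0 < C ∧ ∀ (N : ℕ) (B : Matrix (Fin N) (Fin N) ℂ) (ℓ : ℝ) (p q : ℕ∞),
      0 < N → 0 < ℓ → 2 ≤ p → p ≤ q →
      wnorm q ℓ B ≤ C * (1 + ((N : ℝ) * ℓ) ^ expo p q) * wnorm p ℓ B := by
  refine ⟨1, one_pos, fun N B ℓ p q hN hℓ hp hpq => ?_⟩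
  have h₂ : 0 ≤ schatten 2 B / ℓ ^ (2 : ℝ)⁻¹ :=
    div_nonneg (schatten_nonneg B 2) (by positivity)
  have hx : (0 : ℝ) ≤ N * ℓ := by positivity
  rw [one_mul]
  induction p using ENat.recTopCoe with
  | top =>
    obtain rfl : q = ⊤ := top_le_iff.mp hpq
    rw [wnorm_top]
    exact add_le_one_add_mul_add h₂ (norm_nonneg _) (Real.rpow_nonneg hx _)
      (by simp [expo])
  | coe k =>
    have hk : 0 < k := by exact_mod_cast two_pos.trans_le hp
    have hb : 0 ≤ schatten k B / ℓ ^ (k : ℝ)⁻¹ :=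
      div_nonneg (schatten_nonneg B k) (Real.rpow_pos_of_pos hℓ _).le
    induction q using ENat.recTopCoe with
    | top =>
      rw [wnorm_top, wnorm_natCast]
      exact add_le_one_add_mul_add h₂ hb (Real.rpow_nonneg hx _)
        (opNorm_le_rpow_mul_schatten_div_rpow B hN hℓ hk)
    | coe m =>
      have hkm : k ≤ m := by exact_mod_cast hpq
      rw [wnorm_natCast, wnorm_natCast, expo_natCast_natCast hk.ne' (hk.trans_le hkm).ne']
      exact add_le_one_add_mul_add h₂ hb (Real.rpow_nonneg hx _)
        (schatten_div_rpow_le B hN hℓ hk hkm)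
end

section
/- Let W be an N×N Hermitian matrix with eigenvalues λ_i and orthonormal eigenvectors u_i, let Q, R ∈ ℂ^{N×N}, and z, w ∈ ℂ∖ℝ with resolvent G(ζ) = (W - ζ)^{-1}. Then ⟨Im G(z) Q G(w) R Im G(z) R* G(w)* Q*⟩ ≤ C · N · ⟨Im G(z) Q |G(w)| Q*⟩ · ⟨Im G(z) R* |G(w)| R⟩ for a universal constant C, where |G(w)| = (G(w)G(w)*)^{1/2} and Im G = (G - G*)/(2i). -/
open Matrix MeasureTheory Asymptotics
open scoped ComplexOrder BigOperators

/-! Since `Im G(z) = Im z · G(z) G(z)ᴴ`, put `D = G(z) G(z)ᴴ = P²`. The resolvent `G = G(w)` is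
invertible and normal, so its polar decomposition reads `G = T² U` with `T = |G|^{1/2}` and
`Uᴴ T² U = |G|`. The left side is then `(Im z)² ‖P Q T · T U R P‖₂²`, and submultiplicativity of
the Frobenius norm bounds it by `(Im z)² ‖P Q T‖₂² ‖T U R P‖₂²`, which is the right side with
`C = 1`. -/

open scoped MatrixOrder

section Frobenius

attribute [local instance] Matrix.frobeniusSeminormedAddCommGroup
variable {l m n : Type*} [Fintype l] [Fintype m] [Fintype n]

lemma Matrix.re_trace_mul_conjTranspose_self (M : Matrix m n ℂ) :
    (M * Mᴴ).trace.re = ‖M‖ ^ 2 := by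
  rw [frobenius_norm_def, ← Real.sqrt_eq_rpow, Real.sq_sqrt (by positivity)]
  simp only [trace, diag_apply, mul_apply, conjTranspose_apply, RCLike.star_def, Complex.mul_conj,
    Complex.normSq_eq_norm_sq, Complex.re_sum, Complex.ofReal_re, Real.rpow_ofNat]

lemma Matrix.re_trace_mul_mul_conjTranspose_le (A : Matrix l m ℂ) (B : Matrix m n ℂ) :
    (A * B * (A * B)ᴴ).trace.re ≤ (A * Aᴴ).trace.re * (B * Bᴴ).trace.re := by
  simp only [re_trace_mul_conjTranspose_self, ← mul_pow]
  exact pow_le_pow_left₀ (norm_nonneg _) (frobenius_norm_mul A B) 2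

end Frobenius

section

variable {n : Type*} [Fintype n] [DecidableEq n]

lemma Matrix.re_trace_mul_mul_mul_conjTranspose_le {D : Matrix n n ℂ} (hD : 0 ≤ D)
    (B C : Matrix n n ℂ) :
    (D * (B * C) * D * (B * C)ᴴ).trace.re ≤
      (D * B * Bᴴ).trace.re * (D * Cᴴ * C).trace.re := by
  -- with `D = P²` the three traces are `‖P B C P‖₂²`, `‖P B‖₂²` and `‖C P‖₂²`
  obtain ⟨P, hPH, rfl⟩ : ∃ P : Matrix n n ℂ, Pᴴ = P ∧ P * P = D :=
    ⟨_, (CFC.sqrt_nonneg D).posSemidef.isHermitian.eq, CFC.sqrt_mul_sqrt_self D⟩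
  have key := re_trace_mul_mul_conjTranspose_le (P * B) (C * P)
  simp only [conjTranspose_mul, hPH, mul_assoc] at key ⊢
  rw [trace_mul_comm P (P * (B * Bᴴ)), trace_mul_comm P (P * (B * (C * _)))]
  rw [trace_mul_comm C] at key
  simpa only [mul_assoc] using key

lemma Matrix.exists_eq_sqrt_mul_and_conj_sqrt_eq {G : Matrix n n ℂ} (hG : IsUnit G) :
    ∃ U : Matrix n n ℂ, G = CFC.sqrt (G * Gᴴ) * U ∧
      Uᴴ * CFC.sqrt (G * Gᴴ) * U = CFC.sqrt (Gᴴ * G) := by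
  set S := CFC.sqrt (G * Gᴴ)
  have hS : 0 ≤ S := CFC.sqrt_nonneg _
  have hSS : S * S = G * Gᴴ :=
    CFC.sqrt_mul_sqrt_self _ (posSemidef_self_mul_conjTranspose G).nonneg
  have hSH : Sᴴ = S := hS.posSemidef.isHermitian.eq
  have hSdet : IsUnit S.det := by
    rw [← isUnit_iff_isUnit_det]
    exact isUnit_of_mul_isUnit_left (hSS ▸ hG.mul hG.star)
  -- `U = S⁻¹ G` is unitary, so `Uᴴ S U` is a positive square root of `Uᴴ S² U = Gᴴ G`
  set U := S⁻¹ * G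
  have hU : U * Uᴴ = 1 := by
    simp only [U, conjTranspose_mul, conjTranspose_nonsing_inv, hSH, mul_assoc]
    rw [← mul_assoc G, ← hSS, mul_assoc S, mul_nonsing_inv _ hSdet, mul_one,
      nonsing_inv_mul _ hSdet]
  refine ⟨U, (mul_nonsing_inv_cancel_left _ _ hSdet).symm, (CFC.sqrt_unique ?_ ?_).symm⟩
  · calc Uᴴ * S * U * (Uᴴ * S * U) = Uᴴ * S * (U * Uᴴ) * S * U := by noncomm_ring
      _ = (S * U)ᴴ * (S * U) := by rw [hU, conjTranspose_mul S U, hSH]; noncomm_ring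
      _ = Gᴴ * G := by rw [mul_nonsing_inv_cancel_left _ _ hSdet]
  · exact (hS.posSemidef.conjTranspose_mul_mul_same U).nonneg

theorem Matrix.re_trace_sandwich_le {D G : Matrix n n ℂ} (hD : 0 ≤ D) (hG : IsUnit G)
    (Q R : Matrix n n ℂ) :
    (D * Q * G * R * D * Rᴴ * Gᴴ * Qᴴ).trace.re ≤
      (D * Q * CFC.sqrt (G * Gᴴ) * Qᴴ).trace.re * (D * Rᴴ * CFC.sqrt (Gᴴ * G) * R).trace.re := by
  obtain ⟨U, hGU, hUSU⟩ := exists_eq_sqrt_mul_and_conj_sqrt_eq hG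
  rw [← hUSU]
  obtain ⟨T, hTH, hTT⟩ : ∃ T : Matrix n n ℂ, Tᴴ = T ∧ T * T = CFC.sqrt (G * Gᴴ) :=
    ⟨_, (CFC.sqrt_nonneg _).posSemidef.isHermitian.eq,
      CFC.sqrt_mul_sqrt_self _ (CFC.sqrt_nonneg _)⟩
  generalize CFC.sqrt (G * Gᴴ) = S at hGU hTT ⊢
  subst hGU hTT
  have key := re_trace_mul_mul_mul_conjTranspose_le hD (Q * T) (T * U * R)
  simp only [conjTranspose_mul, hTH, mul_assoc] at key ⊢
  exact key

end

lemma Matrix.IsHermitian.isUnit_sub_smul_one {n : Type*} [Fintype n] [DecidableEq n]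
    {W : Matrix n n ℂ} (hW : W.IsHermitian) {ζ : ℂ} (hζ : ζ.im ≠ 0) : IsUnit (W - ζ • 1) := by
  have hdet : (scalar n ζ - W).det ≠ 0 := by
    rw [← eval_charpoly, hW.charpoly_eq, Polynomial.eval_prod]
    refine Finset.prod_ne_zero_iff.mpr fun i _ h => hζ ?_
    simp only [Polynomial.eval_sub, Polynomial.eval_X, Polynomial.eval_C, sub_eq_zero] at h
    simp [h]
  rw [← neg_sub, IsUnit.neg_iff, isUnit_iff_isUnit_det]
  simpa [smul_one_eq_diagonal] using hdet

section Resolvent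

variable {N : ℕ} {W : Matrix (Fin N) (Fin N) ℂ}

lemma resOf_conjTranspose (hW : W.IsHermitian) (ζ : ℂ) :
    (resOf W ζ)ᴴ = resOf W (starRingEnd ℂ ζ) := by
  rw [resOf, resOf, conjTranspose_nonsing_inv, conjTranspose_sub, hW.eq, conjTranspose_smul,
    conjTranspose_one]
  rfl

lemma isUnit_resOf (hW : W.IsHermitian) {ζ : ℂ} (hζ : ζ.im ≠ 0) : IsUnit (resOf W ζ) :=
  isUnit_nonsing_inv_iff.mpr (hW.isUnit_sub_smul_one hζ)

lemma imPart_resOf (hW : W.IsHermitian) {z : ℂ} (hz : z.im ≠ 0) :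
    imPart (resOf W z) = (z.im : ℂ) • (resOf W z * (resOf W z)ᴴ) := by
  have hz' : (starRingEnd ℂ z).im ≠ 0 := by simpa using hz
  have hres : resOf W z - (resOf W z)ᴴ = (z - starRingEnd ℂ z) • (resOf W z * (resOf W z)ᴴ) := by
    rw [resOf_conjTranspose hW, resOf, resOf, inv_sub_inv (iff_of_true
      (hW.isUnit_sub_smul_one hz) (hW.isUnit_sub_smul_one hz')), sub_sub_sub_cancel_left,
      ← sub_smul, mul_smul_comm, mul_one, smul_mul_assoc]
  rw [imPart, hres, smul_smul, Complex.sub_conj]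
  congr 1
  field_simp [Complex.I_ne_zero]
  push_cast
  ring

lemma resOf_commute_conjTranspose (hW : W.IsHermitian) (w : ℂ) :
    Commute (resOf W w) (resOf W w)ᴴ := by
  have hcomm : Commute (W - w • 1) (W - starRingEnd ℂ w • 1) :=
    ((Commute.refl W).sub_right ((Commute.one_right W).smul_right _)).sub_left
      ((Commute.one_left _).smul_left w)
  rw [Commute, SemiconjBy, resOf_conjTranspose hW, resOf, resOf, ← Matrix.mul_inv_rev,
    ← Matrix.mul_inv_rev, hcomm.eq]

end Resolvent

lemma matAbs_eq_sqrt {N : ℕ} (A : Matrix (Fin N) (Fin N) ℂ) : matAbs A = CFC.sqrt (A * Aᴴ) := by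
  rw [CFC.sqrt_eq_real_sqrt _ (posSemidef_self_mul_conjTranspose A).nonneg,
    cfcₙ_eq_cfc (hf0 := Real.sqrt_zero), (posSemidef_self_mul_conjTranspose A).1.cfc_eq,
    IsHermitian.cfc, Unitary.conjStarAlgAut_apply]
  rfl

lemma re_ntr {N : ℕ} (M : Matrix (Fin N) (Fin N) ℂ) : (ntr M).re = (N : ℝ)⁻¹ * M.trace.re := by
  simp [ntr]

/-- reduction inequality
`⟨Im G(z) Q G(w) R Im G(z) R* G(w)* Q*⟩ ≤ C N ⟨Im G(z) Q |G(w)| Q*⟩ ⟨Im G(z) R* |G(w)| R⟩`. -/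
theorem reduction_inequality :
    ∃ C : ℝ, 0 < C ∧ ∀ (N : ℕ) (W Q R : Matrix (Fin N) (Fin N) ℂ) (z w : ℂ),
      W.IsHermitian → z.im ≠ 0 → w.im ≠ 0 →
      (ntr (imPart (resOf W z) * Q * resOf W w * R * imPart (resOf W z) * Rᴴ *
          (resOf W w)ᴴ * Qᴴ)).re
        ≤ C * N * (ntr (imPart (resOf W z) * Q * matAbs (resOf W w) * Qᴴ)).re *
            (ntr (imPart (resOf W z) * Rᴴ * matAbs (resOf W w) * R)).re := by
  refine ⟨1, one_pos, fun N W Q R z w hW hz hw => ?_⟩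
  have key := re_trace_sandwich_le (posSemidef_self_mul_conjTranspose (resOf W z)).nonneg
    (isUnit_resOf hW hw) Q R
  rw [← (resOf_commute_conjTranspose hW w).eq, ← matAbs_eq_sqrt] at key
  rw [imPart_resOf hW hz]
  simp only [re_ntr, Matrix.smul_mul, Matrix.mul_smul, smul_smul, trace_smul, smul_eq_mul,
    ← Complex.ofReal_mul, Complex.re_ofReal_mul]
  rcases N.eq_zero_or_pos with rfl | hN
  · simp
  · have hN' : (N : ℝ) ≠ 0 := by positivity
    field_simp
    rw [mul_assoc (z.im ^ 2)]
    exact mul_le_mul_of_nonneg_left key (sq_nonneg _)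
end

section
/- Spectral-decomposition Schwarz bound: let W be Hermitian N×N with resolvent G(ζ)=(W-ζ)^{-1}, let Q_1, Q_2, Q_3 ∈ ℂ^{N×N}, z, w ∈ ℂ∖ℝ, and x, y ∈ ℂ^N. Then |⟨x, Q_1 G(z) Q_2 G(w) Q_3 y⟩| ≤ C √N · (⟨x, Q_1|G(z)|Q_1* x⟩)^{1/2} (⟨y, Q_3*|G(w)|Q_3 y⟩)^{1/2} · ⟨|G(z)| Q_2 |G(w)| Q_2*⟩^{1/2}, for a universal constant C. -/
open Matrix MeasureTheory Asymptotics
open scoped ComplexOrder BigOperators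

/-!
Diagonalise `W = U diag(λ) U*`. Then `G(z) = U diag(g) U*` and `|G(z)| = U diag(|g|) U*`, so in
the eigenbasis the pairing is `∑ i j, conj aᵢ gᵢ Bᵢⱼ hⱼ cⱼ` with `a = U* Q₁* x`, `B = U* Q₂ U`,
`c = U* Q₃ y`. Cauchy–Schwarz over pairs `(i, j)` bounds it by
`(∑ |gᵢ| |aᵢ|²)^{1/2} (∑ |hⱼ| |cⱼ|²)^{1/2} (∑ |gᵢ| |hⱼ| |Bᵢⱼ|²)^{1/2}`, and the last factor is
`(Tr |G(z)| Q₂ |G(w)| Q₂*)^{1/2} = √N ⟨…⟩^{1/2}`. Hence `C = 1` works.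
-/

open Unitary

section Diagonal

variable {n : Type*} [Fintype n]

lemma star_dotProduct_mul_mul_mulVec (P A R : Matrix n n ℂ) (x y : n → ℂ) :
    star x ⬝ᵥ ((P * A * R) *ᵥ y) = star (Pᴴ *ᵥ x) ⬝ᵥ (A *ᵥ (R *ᵥ y)) := by
  rw [← mulVec_mulVec, ← mulVec_mulVec, dotProduct_mulVec, star_mulVec,
    conjTranspose_conjTranspose]

variable [DecidableEq n]

lemma re_star_dotProduct_diagonal_mulVec_self (r : n → ℝ) (a : n → ℂ) :
    (star a ⬝ᵥ (diagonal (fun i => (r i : ℂ)) *ᵥ a)).re = ∑ i, r i * ‖a i‖ ^ 2 := by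
  simp only [dotProduct, mulVec_diagonal, Complex.re_sum, Pi.star_apply]
  refine Finset.sum_congr rfl fun i _ => ?_
  rw [mul_left_comm, Complex.star_def, Complex.conj_mul', ← Complex.ofReal_pow,
    ← Complex.ofReal_mul, Complex.ofReal_re]

lemma re_trace_diagonal_mul_diagonal_mul_conjTranspose (r s : n → ℝ) (B : Matrix n n ℂ) :
    (diagonal (fun i => (r i : ℂ)) * B * diagonal (fun j => (s j : ℂ)) * Bᴴ).trace.re
      = ∑ i, ∑ j, r i * s j * ‖B i j‖ ^ 2 := by
  simp only [trace, diag, Complex.re_sum]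
  refine Finset.sum_congr rfl fun i _ => ?_
  rw [mul_apply, Complex.re_sum]
  refine Finset.sum_congr rfl fun j _ => ?_
  rw [mul_diagonal, diagonal_mul, conjTranspose_apply, Complex.star_def,
    show (r i : ℂ) * B i j * (s j : ℂ) * (starRingEnd ℂ) (B i j)
      = ((r i * s j : ℝ) : ℂ) * (B i j * (starRingEnd ℂ) (B i j)) by push_cast; ring,
    Complex.mul_conj', ← Complex.ofReal_pow, ← Complex.ofReal_mul, Complex.ofReal_re]

lemma norm_star_dotProduct_diagonal_mul_diagonal_mulVec_le (a c g h : n → ℂ)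
    (B : Matrix n n ℂ) :
    ‖star a ⬝ᵥ ((diagonal g * B * diagonal h) *ᵥ c)‖
      ≤ √(∑ i, ‖g i‖ * ‖a i‖ ^ 2) * √(∑ j, ‖h j‖ * ‖c j‖ ^ 2) *
          √(∑ i, ∑ j, ‖g i‖ * ‖h j‖ * ‖B i j‖ ^ 2) := by
  have expand : star a ⬝ᵥ ((diagonal g * B * diagonal h) *ᵥ c)
      = ∑ i, ∑ j, star (a i) * g i * B i j * h j * c j := by
    simp only [dotProduct, mulVec, mul_diagonal, diagonal_mul, Pi.star_apply, Finset.mul_sum]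
    exact Finset.sum_congr rfl fun i _ => Finset.sum_congr rfl fun j _ => by ring
  have triangle : ‖∑ i, ∑ j, star (a i) * g i * B i j * h j * c j‖
      ≤ ∑ i, ∑ j, ‖a i‖ * ‖g i‖ * ‖B i j‖ * ‖h j‖ * ‖c j‖ := by
    refine (norm_sum_le _ _).trans (Finset.sum_le_sum fun i _ => ?_)
    refine (norm_sum_le _ _).trans_eq (Finset.sum_congr rfl fun j _ => ?_)
    simp only [norm_mul, norm_star]
  -- Cauchy–Schwarz over pairs `(i, j)`, splitting `‖g i‖` and `‖h j‖` evenly between the factors.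
  have cauchySchwarz : (∑ i, ∑ j, ‖a i‖ * ‖g i‖ * ‖B i j‖ * ‖h j‖ * ‖c j‖) ^ 2
      ≤ ((∑ i, ‖g i‖ * ‖a i‖ ^ 2) * ∑ j, ‖h j‖ * ‖c j‖ ^ 2) *
          ∑ i, ∑ j, ‖g i‖ * ‖h j‖ * ‖B i j‖ ^ 2 := by
    rw [Finset.sum_mul_sum]
    simp only [← Fintype.sum_prod_type']
    exact Finset.sum_sq_le_sum_mul_sum_of_sq_le_mul _ (fun _ _ => by positivity)
      (fun _ _ => by positivity) (fun _ _ => le_of_eq (by ring))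
  rw [expand, ← Real.sqrt_mul (by positivity), ← Real.sqrt_mul (by positivity)]
  exact triangle.trans (Real.le_sqrt_of_sq_le cauchySchwarz)

lemma norm_star_dotProduct_diagonal_schwarz (Q₁ Q₂ Q₃ : Matrix n n ℂ) (g h x y : n → ℂ) :
    ‖star x ⬝ᵥ ((Q₁ * diagonal g * Q₂ * diagonal h * Q₃) *ᵥ y)‖
      ≤ √(star x ⬝ᵥ ((Q₁ * diagonal (fun i => (‖g i‖ : ℂ)) * Q₁ᴴ) *ᵥ x)).re *
        √(star y ⬝ᵥ ((Q₃ᴴ * diagonal (fun j => (‖h j‖ : ℂ)) * Q₃) *ᵥ y)).re *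
        √(diagonal (fun i => (‖g i‖ : ℂ)) * Q₂ * diagonal (fun j => (‖h j‖ : ℂ)) *
            Q₂ᴴ).trace.re := by
  rw [show Q₁ * diagonal g * Q₂ * diagonal h * Q₃ = Q₁ * (diagonal g * Q₂ * diagonal h) * Q₃ by
      simp only [Matrix.mul_assoc],
    star_dotProduct_mul_mul_mulVec Q₁, star_dotProduct_mul_mul_mulVec Q₁,
    star_dotProduct_mul_mul_mulVec Q₃ᴴ, conjTranspose_conjTranspose,
    re_star_dotProduct_diagonal_mulVec_self (fun i => ‖g i‖),
    re_star_dotProduct_diagonal_mulVec_self (fun j => ‖h j‖),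
    re_trace_diagonal_mul_diagonal_mul_conjTranspose (fun i => ‖g i‖) (fun j => ‖h j‖)]
  exact norm_star_dotProduct_diagonal_mul_diagonal_mulVec_le _ _ _ _ _

lemma norm_star_dotProduct_conj_diagonal_schwarz (u : unitary (Matrix n n ℂ))
    (Q₁ Q₂ Q₃ : Matrix n n ℂ) (g h x y : n → ℂ) :
    ‖star x ⬝ᵥ ((Q₁ * conjStarAlgAut ℂ _ u (diagonal g) * Q₂ *
        conjStarAlgAut ℂ _ u (diagonal h) * Q₃) *ᵥ y)‖
      ≤ √(star x ⬝ᵥ ((Q₁ * conjStarAlgAut ℂ _ u (diagonal (fun i => (‖g i‖ : ℂ))) * Q₁ᴴ) *ᵥ x)).re *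
        √(star y ⬝ᵥ ((Q₃ᴴ * conjStarAlgAut ℂ _ u (diagonal (fun j => (‖h j‖ : ℂ))) * Q₃) *ᵥ y)).re *
        √(conjStarAlgAut ℂ _ u (diagonal (fun i => (‖g i‖ : ℂ))) * Q₂ *
            conjStarAlgAut ℂ _ u (diagonal (fun j => (‖h j‖ : ℂ))) * Q₂ᴴ).trace.re := by
  set U : Matrix n n ℂ := ↑u
  have key := norm_star_dotProduct_diagonal_schwarz (Q₁ * U) (star U * Q₂ * U) (star U * Q₃)
    g h x y
  simp only [conjStarAlgAut_apply, ← star_eq_conjTranspose, star_mul, star_star,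
    Matrix.mul_assoc] at key ⊢
  rw [trace_mul_comm]
  simpa only [Matrix.mul_assoc] using key

end Diagonal

section Resolvent

variable {N : ℕ}

open MatrixOrder in
lemma matAbs_eq_of_sq_eq {A X : Matrix (Fin N) (Fin N) ℂ} (hX : X.PosSemidef)
    (h : X ^ 2 = A * Aᴴ) : matAbs A = X := by
  have hA := posSemidef_self_mul_conjTranspose A
  have hcfc : matAbs A = cfc Real.sqrt (A * Aᴴ) := by rw [hA.1.cfc_eq]; rfl
  rw [hcfc, ← cfcₙ_eq_cfc, ← CFC.sqrt_eq_real_sqrt _ hA.nonneg]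
  exact CFC.sqrt_unique (by rw [← h, pow_two]) hX.nonneg

lemma matAbs_conj_diagonal (u : unitary (Matrix (Fin N) (Fin N) ℂ)) (g : Fin N → ℂ) :
    matAbs (conjStarAlgAut ℂ _ u (diagonal g))
      = conjStarAlgAut ℂ _ u (diagonal (fun i => (‖g i‖ : ℂ))) := by
  refine matAbs_eq_of_sq_eq ?_ ?_
  · rw [conjStarAlgAut_apply]
    exact (posSemidef_diagonal_iff.mpr fun i => Complex.zero_le_real.mpr (norm_nonneg _))
      |>.mul_mul_conjTranspose_same _
  · rw [← map_pow, ← star_eq_conjTranspose, ← map_star, ← map_mul, diagonal_pow,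
      star_eq_conjTranspose, diagonal_conjTranspose, diagonal_mul_diagonal]
    congr 2
    funext i
    rw [Pi.pow_apply, Pi.star_apply, Complex.star_def, Complex.mul_conj']

lemma resOf_eq_conj_diagonal {W : Matrix (Fin N) (Fin N) ℂ} (hW : W.IsHermitian) {z : ℂ}
    (hz : z.im ≠ 0) :
    resOf W z = conjStarAlgAut ℂ _ hW.eigenvectorUnitary
      (diagonal (fun i => ((hW.eigenvalues i : ℂ) - z)⁻¹)) := by
  have hne : ∀ i, (hW.eigenvalues i : ℂ) - z ≠ 0 := fun i h => hz <| by
    simpa using congrArg Complex.im h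
  have hsub : W - z • (1 : Matrix (Fin N) (Fin N) ℂ)
      = conjStarAlgAut ℂ _ hW.eigenvectorUnitary
          (diagonal (fun i => (hW.eigenvalues i : ℂ) - z)) := by
    rw [← diagonal_sub, map_sub, ← smul_one_eq_diagonal, map_smul, map_one]
    conv_lhs => rw [hW.spectral_theorem]
    rfl
  rw [resOf, hsub]
  refine inv_eq_right_inv ?_
  rw [← map_mul, diagonal_mul_diagonal, ← map_one (conjStarAlgAut ℂ _ hW.eigenvectorUnitary),
    ← diagonal_one]
  congr 2
  funext i
  exact mul_inv_cancel₀ (hne i)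

lemma sqrt_re_trace_eq_sqrt_mul_sqrt_re_ntr (M : Matrix (Fin N) (Fin N) ℂ) :
    √M.trace.re = √N * √(ntr M).re := by
  rcases Nat.eq_zero_or_pos N with rfl | hN
  · simp [trace]
  rw [ntr, ← Complex.ofReal_natCast, ← Complex.ofReal_inv, Complex.re_ofReal_mul,
    ← Real.sqrt_mul (Nat.cast_nonneg N), mul_inv_cancel_left₀ (by positivity)]

end Resolvent

/-- spectral-decomposition Schwarz bound for isotropic chains. -/
theorem iso_schwarz :
    ∃ C : ℝ, 0 < C ∧ ∀ (N : ℕ) (W Q₁ Q₂ Q₃ : Matrix (Fin N) (Fin N) ℂ) (z w : ℂ)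
      (x y : Fin N → ℂ), W.IsHermitian → z.im ≠ 0 → w.im ≠ 0 →
      ‖(star x ⬝ᵥ ((Q₁ * resOf W z * Q₂ * resOf W w * Q₃) *ᵥ y))‖
        ≤ C * Real.sqrt N *
            Real.sqrt ((star x ⬝ᵥ ((Q₁ * matAbs (resOf W z) * Q₁ᴴ) *ᵥ x)).re) *
            Real.sqrt ((star y ⬝ᵥ ((Q₃ᴴ * matAbs (resOf W w) * Q₃) *ᵥ y)).re) *
            Real.sqrt ((ntr (matAbs (resOf W z) * Q₂ * matAbs (resOf W w) * Q₂ᴴ)).re) := by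
  refine ⟨1, one_pos, fun N W Q₁ Q₂ Q₃ z w x y hW hz hw => ?_⟩
  rw [resOf_eq_conj_diagonal hW hz, resOf_eq_conj_diagonal hW hw, matAbs_conj_diagonal,
    matAbs_conj_diagonal]
  refine (norm_star_dotProduct_conj_diagonal_schwarz _ _ _ _ _ _ _ _).trans_eq ?_
  rw [sqrt_re_trace_eq_sqrt_mul_sqrt_re_ntr]
  ring
end
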